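/- arXiv:1610.05137 — 2 statements merged into one kernel-verified Lean document; each statement's English description precedes it below -/
import Mathlib

section
/- Let L be a finite semidistributive lattice. Then the map κ is a bijection from the set of join-irreducible elements of L to the set of meet-irreducible elements of L, and a finite set F of join-irreducible elements is a face of the canonical join complex of L if and only if {κ(j) : j ∈ F} is a face of the canonical meet complex of L. In particular, κ induces an isomorphism from the canonical join complex to the canonical meet complex. -/
universe u v

def JoinSemidistrib (α : Type*) [Lattice α] : Prop :=
  ∀ x y z : α, x ⊔ y = x ⊔ z → x ⊔ (y ⊓ z) = x ⊔ y

def MeetSemidistrib (α : Type*) [Lattice α] : Prop :=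
  ∀ x y z : α, x ⊓ y = x ⊓ z → x ⊓ (y ⊔ z) = x ⊓ y

section JoinDefs

variable {α : Type*} [Lattice α] [OrderBot α]

/-- `j` is join-irreducible: not the bottom element, and `j = a ⊔ b` implies `j = a` or `j = b`. -/
def JoinIrred (j : α) : Prop :=
  j ≠ ⊥ ∧ ∀ a b : α, j = a ⊔ b → j = a ∨ j = b

/-- `A` join-refines `B`: every element of `A` is below some element of `B`. -/
def JoinRefines (A B : Finset α) : Prop :=
  ∀ a ∈ A, ∃ b ∈ B, a ≤ b

/-- `A` is an irredundant join representation of `w`. -/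
def IrredJoinRep (A : Finset α) (w : α) : Prop :=
  A.sup id = w ∧ ∀ A' ⊂ A, A'.sup id < w

/-- `A` is the canonical join representation of `w`: the irredundant join representation
of `w` that join-refines every irredundant join representation of `w`. -/
def CanonicalJoinRep (A : Finset α) (w : α) : Prop :=
  IrredJoinRep A w ∧ ∀ B : Finset α, IrredJoinRep B w → JoinRefines A B

/-- `A` joins canonically, i.e. `A` is a face of the canonical join complex. -/
def JoinsCanonically (A : Finset α) : Prop :=
  CanonicalJoinRep A (A.sup id)

/-- `j` is a canonical joinand of `w`. -/
def CanonicalJoinand (j w : α) : Prop :=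
  ∃ A : Finset α, CanonicalJoinRep A w ∧ j ∈ A

end JoinDefs

/-- The canonical join complex is flag: any finite set of join-irreducible elements all of
whose two-element subsets are faces is itself a face. -/
def FlagCanonicalJoinComplex (α : Type*) [Lattice α] [OrderBot α] [DecidableEq α] : Prop :=
  ∀ F : Finset α, (∀ j ∈ F, JoinIrred j) →
    (∀ j ∈ F, ∀ j' ∈ F, j ≠ j' → JoinsCanonically ({j, j'} : Finset α)) →
    JoinsCanonically F

/-- A lattice is crosscut-simplicial if for every `x ≤ y` and every proper subset `S` of the
set of atoms of the interval `[x, y]` (elements `a` with `x ⋖ a` and `a ≤ y`), the join of `x`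
with all elements of `S` is strictly less than `y`. -/
def CrosscutSimplicial (β : Type*) [Lattice β] : Prop :=
  ∀ x y : β, x ≤ y → ∀ S : Finset β,
    (∀ a ∈ S, x ⋖ a ∧ a ≤ y) →
    (∃ a : β, (x ⋖ a ∧ a ≤ y) ∧ a ∉ S) →
    S.fold (· ⊔ · : β → β → β) x id < y

section MeetDefs

variable {α : Type*} [Lattice α] [OrderTop α]

/-- `m` is meet-irreducible: not the top element, and `m = a ⊓ b` implies `m = a` or `m = b`. -/
def MeetIrred (m : α) : Prop :=
  m ≠ ⊤ ∧ ∀ a b : α, m = a ⊓ b → m = a ∨ m = b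

/-- `A` meet-refines `B`: every element of `A` is above some element of `B`. -/
def MeetRefines (A B : Finset α) : Prop :=
  ∀ a ∈ A, ∃ b ∈ B, b ≤ a

/-- `A` is an irredundant meet representation of `w`. -/
def IrredMeetRep (A : Finset α) (w : α) : Prop :=
  A.inf id = w ∧ ∀ A' ⊂ A, w < A'.inf id

/-- `A` is the canonical meet representation of `w`. -/
def CanonicalMeetRep (A : Finset α) (w : α) : Prop :=
  IrredMeetRep A w ∧ ∀ B : Finset α, IrredMeetRep B w → MeetRefines A B

/-- `A` meets canonically, i.e. `A` is a face of the canonical meet complex. -/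
def MeetsCanonically (A : Finset α) : Prop :=
  CanonicalMeetRep A (A.inf id)

end MeetDefs

/-- The canonical meet complex is flag. -/
def FlagCanonicalMeetComplex (α : Type*) [Lattice α] [OrderTop α] [DecidableEq α] : Prop :=
  ∀ F : Finset α, (∀ m ∈ F, MeetIrred m) →
    (∀ m ∈ F, ∀ m' ∈ F, m ≠ m' → MeetsCanonically ({m, m'} : Finset α)) →
    MeetsCanonically F


/-!
In a finite meet-semidistributive lattice the set `K(j) = {a | j ⊓ a = j_*}` is closed
under joins, so `κ(j)` is its join; join-semidistributivity adds that `x ≤ κ(j) ⊔ j` and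
`x ≰ κ(j)` force `j ≤ x`. From these two facts, a set `A` of join-irreducibles joins
canonically iff `j ≤ κ(j')` for all distinct `j, j' ∈ A`. Dually, a set `G` of
meet-irreducibles meets canonically iff `κᵈ(m') ≤ m` for all distinct `m, m' ∈ G`, where
`κᵈ` is `κ` computed in `αᵒᵈ` and is inverse to `κ`. For `G = κ(A)` the two pairwise
conditions are the same.
-/

open Finset OrderDual

theorem JoinIrred.supIrred {α : Type*} [Lattice α] [OrderBot α] {j : α} (hj : JoinIrred j) :
    SupIrred j :=
  ⟨not_isMin_iff_ne_bot.2 hj.1, fun a b h => (hj.2 a b h.symm).imp Eq.symm Eq.symm⟩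

theorem irredJoinRep_pair {α : Type*} [Lattice α] [OrderBot α] [DecidableEq α] {a b w : α}
    (ha : a < w) (hb : b < w) (h : a ⊔ b = w) : IrredJoinRep {a, b} w := by
  refine ⟨by simpa using h, fun A hA => ?_⟩
  obtain ⟨x, hx, hxA⟩ := exists_of_ssubset hA
  have hmem : ∀ c ∈ A, c = a ∨ c = b := fun c hc => by simpa using hA.subset hc
  rw [mem_insert, mem_singleton] at hx
  rcases hx with rfl | rfl
  · exact (Finset.sup_le fun c hc =>
      ((hmem c hc).resolve_left (ne_of_mem_of_not_mem hc hxA)).le).trans_lt hb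
  · exact (Finset.sup_le fun c hc =>
      ((hmem c hc).resolve_right (ne_of_mem_of_not_mem hc hxA)).le).trans_lt ha

section Kappa

variable {α : Type*} [Lattice α] [BoundedOrder α] [Fintype α] {j m a x : α}

open scoped Classical

noncomputable def jStar (j : α) : α :=
  (univ.filter (· < j)).sup id

theorem le_jStar (h : x < j) : x ≤ jStar j :=
  le_sup (f := id) (mem_filter.2 ⟨mem_univ _, h⟩)

theorem JoinIrred.jStar_lt (hj : JoinIrred j) : jStar j < j := by
  refine (Finset.sup_le fun x hx => (mem_filter.1 hx).2.le).lt_of_ne fun h => ?_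
  obtain ⟨x, hx, rfl⟩ := hj.supIrred.finset_sup_eq h
  exact (mem_filter.1 hx).2.ne rfl

theorem CovBy.eq_jStar (h : x ⋖ j) (hj : JoinIrred j) : x = jStar j :=
  (le_jStar h.lt).eq_of_not_lt fun hlt => h.2 hlt hj.jStar_lt

theorem JoinIrred.inf_eq_jStar_iff (hj : JoinIrred j) :
    j ⊓ a = jStar j ↔ jStar j ≤ a ∧ ¬ j ≤ a := by
  refine ⟨fun h => ⟨h ▸ inf_le_right, fun hja => ?_⟩, fun ⟨h₁, h₂⟩ => ?_⟩
  · exact hj.jStar_lt.ne (h.symm.trans (inf_eq_left.2 hja))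
  · refine le_antisymm (le_jStar (inf_le_left.lt_of_ne fun h => h₂ (inf_eq_left.1 h))) ?_
    exact le_inf hj.jStar_lt.le h₁

noncomputable def kappa (j : α) : α :=
  (univ.filter fun a => jStar j ≤ a ∧ ¬ j ≤ a).sup id

theorem le_kappa (h₁ : jStar j ≤ a) (h₂ : ¬ j ≤ a) : a ≤ kappa j :=
  le_sup (f := id) (mem_filter.2 ⟨mem_univ _, h₁, h₂⟩)

theorem inf_kappa (hM : MeetSemidistrib α) (hj : JoinIrred j) : j ⊓ kappa j = jStar j := by
  have hne : (univ.filter fun a => jStar j ≤ a ∧ ¬ j ≤ a).Nonempty :=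
    ⟨jStar j, mem_filter.2 ⟨mem_univ _, le_rfl, hj.jStar_lt.not_ge⟩⟩
  rw [kappa, ← sup'_eq_sup hne]
  exact sup'_induction hne id (fun a ha b hb => (hM j a b (ha.trans hb.symm)).trans ha)
    fun a ha => hj.inf_eq_jStar_iff.2 (mem_filter.1 ha).2

theorem isGreatest_kappa (hM : MeetSemidistrib α) (hj : JoinIrred j) :
    IsGreatest {a | jStar j ≤ a ∧ ¬ j ≤ a} (kappa j) :=
  ⟨hj.inf_eq_jStar_iff.1 (inf_kappa hM hj), fun _ ha => le_kappa ha.1 ha.2⟩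

theorem jStar_le_kappa (hM : MeetSemidistrib α) (hj : JoinIrred j) : jStar j ≤ kappa j :=
  (isGreatest_kappa hM hj).1.1

theorem not_le_kappa (hM : MeetSemidistrib α) (hj : JoinIrred j) : ¬ j ≤ kappa j :=
  (isGreatest_kappa hM hj).1.2

theorem le_of_kappa_lt (hM : MeetSemidistrib α) (hj : JoinIrred j) (h : kappa j < x) : j ≤ x :=
  not_not.1 fun hjx => h.not_ge (le_kappa ((jStar_le_kappa hM hj).trans h.le) hjx)

theorem kappa_meetIrred (hM : MeetSemidistrib α) (hj : JoinIrred j) : MeetIrred (kappa j) := by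
  refine ⟨fun h => not_le_kappa hM hj (h ▸ le_top), fun a b hab => ?_⟩
  by_contra! hne
  have ha := le_of_kappa_lt hM hj ((hab ▸ inf_le_left : kappa j ≤ a).lt_of_ne hne.1)
  have hb := le_of_kappa_lt hM hj ((hab ▸ inf_le_right : kappa j ≤ b).lt_of_ne hne.2)
  exact not_le_kappa hM hj (hab ▸ le_inf ha hb)

theorem le_of_le_kappa_sup (hJ : JoinSemidistrib α) (hM : MeetSemidistrib α) (hj : JoinIrred j)
    (hx : x ≤ kappa j ⊔ j) (hxk : ¬ x ≤ kappa j) : j ≤ x := by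
  have hlt : kappa j < kappa j ⊔ x := left_lt_sup.2 hxk
  have hsup : kappa j ⊔ x = kappa j ⊔ j :=
    le_antisymm (sup_le le_sup_left hx) (sup_le le_sup_left (le_of_kappa_lt hM hj hlt))
  have hinf : ¬ x ⊓ j ≤ kappa j := fun h => hlt.ne (by rw [← hJ _ _ _ hsup, sup_eq_left.2 h])
  by_contra hjx
  exact hinf ((le_jStar (inf_le_right.lt_of_ne fun h => hjx (inf_eq_right.1 h))).trans
    (jStar_le_kappa hM hj))

noncomputable def mStar (m : α) : α :=
  ofDual (jStar (toDual m))

noncomputable def kappaDual (m : α) : α :=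
  ofDual (kappa (toDual m))

theorem MeetIrred.lt_mStar (hm : MeetIrred m) : m < mStar m :=
  JoinIrred.jStar_lt (α := αᵒᵈ) hm

theorem mStar_le (h : m < x) : mStar m ≤ x :=
  le_jStar (α := αᵒᵈ) h

theorem isLeast_kappaDual (hJ : JoinSemidistrib α) (hm : MeetIrred m) :
    IsLeast {a | a ≤ mStar m ∧ ¬ a ≤ m} (kappaDual m) :=
  isGreatest_kappa (α := αᵒᵈ) hJ hm

theorem kappaDual_joinIrred (hJ : JoinSemidistrib α) (hm : MeetIrred m) :
    JoinIrred (kappaDual m) :=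
  kappa_meetIrred (α := αᵒᵈ) hJ hm

theorem kappaDual_kappa (hJ : JoinSemidistrib α) (hM : MeetSemidistrib α) (hj : JoinIrred j) :
    kappaDual (kappa j) = j := by
  have hm := kappa_meetIrred hM hj
  have hmStar : mStar (kappa j) ≤ kappa j ⊔ j := mStar_le (left_lt_sup.2 (not_le_kappa hM hj))
  exact (isLeast_kappaDual hJ hm).unique
    ⟨⟨le_of_kappa_lt hM hj hm.lt_mStar, not_le_kappa hM hj⟩,
      fun a ha => le_of_le_kappa_sup hJ hM hj (ha.1.trans hmStar) ha.2⟩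

theorem kappa_kappaDual (hJ : JoinSemidistrib α) (hM : MeetSemidistrib α) (hm : MeetIrred m) :
    kappa (kappaDual m) = m :=
  kappaDual_kappa (α := αᵒᵈ) hM hJ hm

end Kappa

section Canonical

variable {α : Type*} [Lattice α] [BoundedOrder α] [Fintype α] {A : Finset α} {w j j' : α}

theorem CanonicalJoinRep.le_kappa_of_ne (hA : CanonicalJoinRep A w) (hj : j ∈ A) (hj' : j' ∈ A)
    (hirr : JoinIrred j') (hne : j ≠ j') : j ≤ kappa j' := by
  classical
  obtain ⟨y, hy, hyw⟩ := exists_le_covBy_of_lt (hA.1.2 _ (erase_ssubset hj'))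
  have hle_y : ∀ c ∈ A, c ≠ j' → c ≤ y := fun c hc hc' =>
    (le_sup (f := id) (mem_erase.2 ⟨hc', hc⟩)).trans hy
  have hj'y : ¬ j' ≤ y := by
    intro h
    refine hyw.lt.not_ge (hA.1.1 ▸ Finset.sup_le fun c hc => ?_)
    obtain rfl | hc' := eq_or_ne c j'
    exacts [h, hle_y c hc hc']
  have hj'w : j' ≤ w := hA.1.1 ▸ le_sup (f := id) hj'
  refine (hle_y j hj hne).trans (le_kappa ?_ hj'y)
  -- otherwise `{y, j'_*}` is an irredundant join representation of `w` not refined by `A`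
  by_contra hjs
  have hsup : y ⊔ jStar j' = w :=
    (hyw.eq_or_eq le_sup_left (sup_le hyw.le (hirr.jStar_lt.le.trans hj'w))).resolve_left
      fun h => hjs (h ▸ le_sup_right)
  obtain ⟨b, hb, hj'b⟩ :=
    hA.2 _ (irredJoinRep_pair hyw.lt (hirr.jStar_lt.trans_le hj'w) hsup) j' hj'
  rw [mem_insert, mem_singleton] at hb
  rcases hb with rfl | rfl
  exacts [hj'y hj'b, hirr.jStar_lt.not_ge hj'b]

theorem joinsCanonically_of_forall_le_kappa (hJ : JoinSemidistrib α) (hM : MeetSemidistrib α)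
    (hA : ∀ j ∈ A, JoinIrred j) (h : ∀ j ∈ A, ∀ j' ∈ A, j ≠ j' → j ≤ kappa j') :
    JoinsCanonically A := by
  have hsup : ∀ j ∈ A, A.sup id ≤ kappa j ⊔ j := fun j hj => Finset.sup_le fun c hc =>
    (eq_or_ne c j).elim (fun hcj => hcj ▸ le_sup_right) fun hcj =>
      (h c hc j hj hcj).trans le_sup_left
  have hnot : ∀ j ∈ A, ¬ A.sup id ≤ kappa j := fun j hj hle =>
    not_le_kappa hM (hA j hj) ((le_sup (f := id) hj).trans hle)
  refine ⟨⟨rfl, fun A' hA' => ?_⟩, fun B hB j hj => ?_⟩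
  · obtain ⟨j, hj, hjA'⟩ := exists_of_ssubset hA'
    have hA'k : A'.sup id ≤ kappa j := Finset.sup_le fun c hc =>
      h c (hA'.subset hc) j hj (ne_of_mem_of_not_mem hc hjA')
    exact (sup_mono hA'.subset).lt_of_ne fun he => hnot j hj (he ▸ hA'k)
  · obtain ⟨b, hb, hbk⟩ : ∃ b ∈ B, ¬ b ≤ kappa j := by
      by_contra! hall
      exact hnot j hj (hB.1 ▸ Finset.sup_le hall)
    have hbw : b ≤ A.sup id := hB.1 ▸ le_sup (f := id) hb
    exact ⟨b, hb, le_of_le_kappa_sup hJ hM (hA j hj) (hbw.trans (hsup j hj)) hbk⟩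

theorem joinsCanonically_iff_forall_le_kappa (hJ : JoinSemidistrib α) (hM : MeetSemidistrib α)
    (hA : ∀ j ∈ A, JoinIrred j) :
    JoinsCanonically A ↔ ∀ j ∈ A, ∀ j' ∈ A, j ≠ j' → j ≤ kappa j' :=
  ⟨fun h _ hj _ hj' => h.le_kappa_of_ne hj hj' (hA _ hj'),
    joinsCanonically_of_forall_le_kappa hJ hM hA⟩

theorem meetsCanonically_iff_forall_kappaDual_le (hJ : JoinSemidistrib α)
    (hM : MeetSemidistrib α) (hA : ∀ m ∈ A, MeetIrred m) :
    MeetsCanonically A ↔ ∀ m ∈ A, ∀ m' ∈ A, m ≠ m' → kappaDual m' ≤ m :=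
  joinsCanonically_iff_forall_le_kappa (α := αᵒᵈ) hM hJ hA

end Canonical

/-- Corollary (iso): in a finite semidistributive lattice, κ is a bijection from
join-irreducibles to meet-irreducibles inducing an isomorphism from the canonical join
complex to the canonical meet complex. -/
theorem stmt_4 {α : Type*} [Lattice α] [BoundedOrder α] [Fintype α] [DecidableEq α]
    (hsd : JoinSemidistrib α ∧ MeetSemidistrib α) :
    ∃ κ : α → α,
      (∀ j jstar : α, JoinIrred j → jstar ⋖ j →
        IsGreatest {a : α | jstar ≤ a ∧ ¬ j ≤ a} (κ j)) ∧
      Set.BijOn κ {j : α | JoinIrred j} {m : α | MeetIrred m} ∧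
      ∀ F : Finset α, (∀ j ∈ F, JoinIrred j) →
        (JoinsCanonically F ↔ MeetsCanonically (F.image κ)) := by
  obtain ⟨hJ, hM⟩ := hsd
  have hbij : Set.BijOn kappa {j : α | JoinIrred j} {m : α | MeetIrred m} :=
    Set.InvOn.bijOn
      ⟨fun j hj => kappaDual_kappa hJ hM hj, fun m hm => kappa_kappaDual hJ hM hm⟩
      (fun j hj => kappa_meetIrred hM hj) fun m hm => kappaDual_joinIrred hJ hm
  refine ⟨kappa, fun j _ hj h => h.eq_jStar hj ▸ isGreatest_kappa hM hj, hbij,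
    fun F hF => ?_⟩
  have hFm : ∀ m ∈ F.image kappa, MeetIrred m :=
    forall_mem_image.2 fun j hj => kappa_meetIrred hM (hF j hj)
  rw [joinsCanonically_iff_forall_le_kappa hJ hM hF,
    meetsCanonically_iff_forall_kappaDual_le hJ hM hFm]
  simp only [forall_mem_image]
  refine ⟨fun h j hj j' hj' hne => ?_, fun h j hj j' hj' hne => ?_⟩
  · rw [kappaDual_kappa hJ hM (hF j' hj')]
    exact h j' hj' j hj (ne_of_apply_ne kappa hne).symm
  · have := h hj' hj (hbij.injOn.ne (hF j' hj') (hF j hj) hne.symm)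
    rwa [kappaDual_kappa hJ hM (hF j hj)] at this
end

section
/- Let L be a finite join-semidistributive lattice and let j be a join-irreducible element of L such that K(j) has no greatest element. Let B be a nonempty antichain in 𝒜_j with ⋁B ∨ j = ⋁B ∨ j_* that is minimal in join-refinement among all such antichains (i.e., every nonempty antichain B' ∈ 𝒜_j with ⋁B' ∨ j = ⋁B' ∨ j_* that join-refines B equals B). Then for each b ∈ B, the set (B \ {b}) ∪ {j} is the canonical join representation of ⋁(B \ {b}) ∨ j. -/
/-!
Let `A = B \ {b}` and let `C` be the canonical join representation of `w = ⋁A ⊔ j`; in a finite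
join-semidistributive lattice it exists and refines every finite set with join `w`, in particular
`A ∪ {j}`. Minimality of `B` gives `j ≰ ⋁X ⊔ j_*` for every `X ⊂ B`. Hence `j ∈ C`: otherwise
every element of `C` lies below `⋁A` or, being below `j`, below `j_*`. The set `C' = C \ {j}`
refines `A`, and semidistributivity applied to `j ⊓ ⋁A ≤ j_*` gives `j ≤ b ⊔ ⋁C' ⊔ j_*`. So the
maximal elements of `C' ∪ {b}` form an antichain of `𝒜_j` absorbing `j` and refining `B`; by
minimality they are `B`, whence `A ⊆ C'` and `C = A ∪ {j}`.
-/

universe u v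

section Refinement

variable {α : Type*} [Lattice α]

theorem JoinRefines.sup_le_sup [OrderBot α] {S T : Finset α} (h : JoinRefines S T) :
    S.sup id ≤ T.sup id :=
  Finset.sup_le fun s hs =>
    let ⟨_, ht, hst⟩ := h s hs
    hst.trans (Finset.le_sup (f := id) ht)

theorem JoinRefines.subset_of_isAntichain {C V : Finset α} (h : JoinRefines C V) (hVC : V ⊆ C)
    (hC : IsAntichain (· ≤ ·) (C : Set α)) : C ⊆ V := by
  intro c hc
  obtain ⟨v, hv, hcv⟩ := h c hc
  rwa [hC.eq hc (hVC hv) hcv]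

theorem JoinRefines.erase_of_isAntichain [DecidableEq α] {j : α} {A C : Finset α}
    (h : JoinRefines C (insert j A)) (hC : IsAntichain (· ≤ ·) (C : Set α)) (hjC : j ∈ C) :
    JoinRefines (C.erase j) A := fun c hc => by
  obtain ⟨d, hd, hcd⟩ := h c (Finset.mem_of_mem_erase hc)
  rcases Finset.mem_insert.1 hd with rfl | hdA
  · exact absurd (hC.eq (Finset.mem_of_mem_erase hc) hjC hcd) (Finset.ne_of_mem_erase hc)
  · exact ⟨d, hdA, hcd⟩

theorem Finset.exists_subset_isAntichain_joinRefines (S : Finset α) :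
    ∃ T ⊆ S, IsAntichain (· ≤ ·) (T : Set α) ∧ JoinRefines S T := by
  classical
  refine ⟨S.filter (Maximal (· ∈ S)), Finset.filter_subset _ _,
    (setOfPred_maximal_antichain _).subset fun x hx => (Finset.mem_filter.1 hx).2, fun s hs => ?_⟩
  obtain ⟨t, hst, ht⟩ := S.exists_le_maximal hs
  exact ⟨t, Finset.mem_filter.2 ⟨ht.prop, ht⟩, hst⟩

theorem canonicalJoinRep_of_forall_joinRefines [OrderBot α] {C : Finset α} {w : α}
    (hC : C.sup id = w) (hanti : IsAntichain (· ≤ ·) (C : Set α))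
    (href : ∀ V : Finset α, V.sup id = w → JoinRefines C V) : CanonicalJoinRep C w := by
  refine ⟨⟨hC, fun C' hC' => ?_⟩, fun V hV => href V hV.1⟩
  refine ((Finset.sup_mono hC'.subset).trans_eq hC).lt_of_ne fun h => ?_
  exact hC'.not_subset ((href C' h).subset_of_isAntichain hC'.subset hanti)

end Refinement

section Semidistrib

variable {α : Type*} [Lattice α]

theorem JoinSemidistrib.le_of_sup_eq_sup (hjsd : JoinSemidistrib α) {x y z : α}
    (h : z ⊔ y = z ⊔ x) (hyx : y ⊓ x ≤ z) : y ≤ z :=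
  le_sup_right.trans ((hjsd z y x h).symm.trans (sup_eq_left.2 hyx)).le

theorem JoinSemidistrib.sup_inf'_eq (hjsd : JoinSemidistrib α) {x w : α} {M : Finset α}
    (hM : M.Nonempty) (h : ∀ m ∈ M, x ⊔ m = w) : x ⊔ M.inf' hM id = w :=
  Finset.inf'_induction hM id (p := (x ⊔ · = w))
    (fun _ ha _ hb => (hjsd x _ _ (ha.trans hb.symm)).trans ha) h

theorem JoinSemidistrib.exists_least_sup_eq [Fintype α] (hjsd : JoinSemidistrib α) {y w : α}
    (hyw : y ≤ w) : ∃ e, y ⊔ e = w ∧ ∀ v, y ⊔ v = w → e ≤ v := by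
  classical
  have hM : (Finset.univ.filter (y ⊔ · = w)).Nonempty := ⟨w, by simpa using hyw⟩
  exact ⟨_, hjsd.sup_inf'_eq hM fun m hm => (Finset.mem_filter.1 hm).2,
    fun v hv => Finset.inf'_le id (by simpa using hv)⟩

/-- The canonical joinands of `w` are found among the least `e` with `y ⊔ e = w`, for the lower
covers `y ⋖ w`. -/
theorem JoinSemidistrib.exists_antichain_forall_joinRefines [OrderBot α] [Fintype α]
    (hjsd : JoinSemidistrib α) (w : α) :
    ∃ C : Finset α, C.sup id = w ∧ IsAntichain (· ≤ ·) (C : Set α) ∧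
      ∀ V : Finset α, V.sup id = w → JoinRefines C V := by
  classical
  choose! e he hemin using fun y (hy : y ⋖ w) => hjsd.exists_least_sup_eq hy.le
  set S := (Finset.univ.filter (· ⋖ w)).image e
  have hS : ∀ s ∈ S, ∃ y, y ⋖ w ∧ s = e y := fun s hs => by
    obtain ⟨y, hy, rfl⟩ := Finset.mem_image.1 hs
    exact ⟨y, (Finset.mem_filter.1 hy).2, rfl⟩
  have hSref : ∀ V : Finset α, V.sup id = w → JoinRefines S V := by
    intro V hV s hs
    obtain ⟨y, hy, rfl⟩ := hS s hs
    obtain ⟨v, hv, hvy⟩ : ∃ v ∈ V, ¬ v ≤ y := by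
      by_contra! hVy
      exact hy.lt.not_ge (hV ▸ Finset.sup_le hVy)
    have hyv : y ⊔ v = w :=
      (hy.eq_or_eq le_sup_left (sup_le hy.le (hV ▸ Finset.le_sup (f := id) hv))).resolve_left
        fun h => hvy (sup_eq_left.1 h)
    exact ⟨v, hv, hemin y hy v hyv⟩
  have hSw : S.sup id = w := by
    have hle : S.sup id ≤ w := Finset.sup_le fun s hs => by
      obtain ⟨y, hy, rfl⟩ := hS s hs
      exact (he y hy).symm ▸ le_sup_right
    refine hle.lt_or_eq.resolve_left fun hlt => ?_
    obtain ⟨y, hSy, hy⟩ := exists_le_covBy_of_lt hlt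
    have hey : e y ≤ y :=
      (Finset.le_sup (f := id) (Finset.mem_image_of_mem e (by simpa using hy))).trans hSy
    exact hy.lt.ne ((sup_eq_left.2 hey).symm.trans (he y hy))
  obtain ⟨C, hCS, hCanti, hSC⟩ := S.exists_subset_isAntichain_joinRefines
  refine ⟨C, (Finset.sup_mono hCS).antisymm hSC.sup_le_sup |>.trans hSw, hCanti,
    fun V hV c hc => hSref V hV c (hCS hc)⟩

end Semidistrib

section Absorbing

variable {α : Type*} [Lattice α]

theorem sup_eq_sup_iff_le_sup {j jstar : α} (hjj : jstar ≤ j) {x : α} :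
    x ⊔ j = x ⊔ jstar ↔ j ≤ x ⊔ jstar :=
  ⟨fun h => h ▸ le_sup_right, fun h => (sup_le le_sup_left h).antisymm (sup_le_sup_left hjj x)⟩

variable [OrderBot α]

theorem JoinIrred.le_of_lt_of_covBy {j jstar c : α} (hj : JoinIrred j) (hstar : jstar ⋖ j)
    (hc : c < j) : c ≤ jstar := by
  rcases hstar.eq_or_eq (le_sup_right : jstar ≤ c ⊔ jstar) (sup_le hc.le hstar.le) with h | h
  · exact h ▸ le_sup_left
  · rcases hj.2 c jstar h.symm with h' | h'
    · exact absurd h' hc.ne'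
    · exact absurd h' hstar.lt.ne'

/-- `B ∈ 𝒜_j` and `⋁B ⊔ j = ⋁B ⊔ j_*`. -/
def IsAbsorbingAntichain (j jstar : α) (B : Finset α) : Prop :=
  j ∉ B ∧ IsAntichain (· ≤ ·) (insert j (B : Set α)) ∧ B.sup id ⊔ j = B.sup id ⊔ jstar

variable {j jstar : α} {B : Finset α}

theorem IsAbsorbingAntichain.nonempty (hB : IsAbsorbingAntichain j jstar B) (hstar : jstar < j) :
    B.Nonempty := by
  rw [Finset.nonempty_iff_ne_empty]
  rintro rfl
  simpa using hstar.ne' (by simpa using hB.2.2)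

theorem IsAbsorbingAntichain.incomp (hB : IsAbsorbingAntichain j jstar B) {b : α} (hb : b ∈ B) :
    ¬ j ≤ b ∧ ¬ b ≤ j :=
  (isAntichain_insert.1 hB.2.1).2 hb fun h => hB.1 (h ▸ hb)

theorem subset_of_le_sup_of_joinRefines (hjj : jstar ≤ j)
    (hmin : ∀ B', IsAbsorbingAntichain j jstar B' → JoinRefines B' B → B' = B) {X : Finset α}
    (hXj : ∀ x ∈ X, ¬ j ≤ x ∧ ¬ x ≤ j) (hjX : j ≤ X.sup id ⊔ jstar) (hXB : JoinRefines X B) :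
    B ⊆ X := by
  obtain ⟨Y, hYX, hYanti, hXY⟩ := X.exists_subset_isAntichain_joinRefines
  have hYsup : Y.sup id = X.sup id := (Finset.sup_mono hYX).antisymm hXY.sup_le_sup
  have hY : IsAbsorbingAntichain j jstar Y :=
    ⟨fun h => (hXj j (hYX h)).1 le_rfl, isAntichain_insert.2 ⟨hYanti, fun y hy _ => hXj y (hYX hy)⟩,
      (sup_eq_sup_iff_le_sup hjj).2 (hYsup ▸ hjX)⟩
  exact hmin Y hY (fun y hy => hXB y (hYX hy)) ▸ hYX

theorem IsAbsorbingAntichain.not_le_sup_sup_of_ssubset (hB : IsAbsorbingAntichain j jstar B)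
    (hjj : jstar ≤ j) (hmin : ∀ B', IsAbsorbingAntichain j jstar B' → JoinRefines B' B → B' = B)
    {X : Finset α} (hX : X ⊂ B) : ¬ j ≤ X.sup id ⊔ jstar := fun h =>
  hX.not_subset <| subset_of_le_sup_of_joinRefines hjj hmin (fun _ hx => hB.incomp (hX.subset hx))
    h fun _ hx => ⟨_, hX.subset hx, le_rfl⟩

theorem mem_of_joinRefines_insert [DecidableEq α] (hj : JoinIrred j) (hstar : jstar ⋖ j)
    {A C : Finset α} (hjA : ¬ j ≤ A.sup id ⊔ jstar) (hjC : j ≤ C.sup id)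
    (hCA : JoinRefines C (insert j A)) : j ∈ C := by
  by_contra hjC'
  refine hjA (hjC.trans (Finset.sup_le fun c hc => ?_))
  obtain ⟨d, hd, hcd⟩ := hCA c hc
  rcases Finset.mem_insert.1 hd with rfl | hdA
  · have hcd' : c ≠ d := by rintro rfl; exact hjC' hc
    exact le_sup_of_le_right (hj.le_of_lt_of_covBy hstar (hcd.lt_of_ne hcd'))
  · exact le_sup_of_le_left (hcd.trans (Finset.le_sup (f := id) hdA))

theorem IsAbsorbingAntichain.le_sup_sup_of_sup_eq [DecidableEq α]
    (hjsd : JoinSemidistrib α) (hj : JoinIrred j) (hstar : jstar ⋖ j)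
    (hB : IsAbsorbingAntichain j jstar B)
    (hmin : ∀ B', IsAbsorbingAntichain j jstar B' → JoinRefines B' B → B' = B) {b : α}
    (hb : b ∈ B) {D : Finset α} (hD : j ⊔ D.sup id = (B.erase b).sup id ⊔ j) :
    j ≤ b ⊔ D.sup id ⊔ jstar := by
  set A := B.erase b
  set z := b ⊔ D.sup id ⊔ jstar
  have hBsup : B.sup id = b ⊔ A.sup id := by
    rw [← Finset.insert_erase hb, Finset.sup_insert]; rfl
  -- both sides are `z ⊔ ⋁A ⊔ j`
  have hzj : z ⊔ j = z ⊔ A.sup id := by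
    have hjBs : j ≤ b ⊔ A.sup id ⊔ jstar := hBsup ▸ (sup_eq_sup_iff_le_sup hstar.le).1 hB.2.2
    have hA : A.sup id ≤ j ⊔ D.sup id := hD ▸ le_sup_left
    refine le_antisymm (sup_le le_sup_left (hjBs.trans ?_)) (sup_le le_sup_left (hA.trans ?_))
    · exact sup_le (sup_le (le_sup_of_le_left (le_sup_of_le_left le_sup_left)) le_sup_right)
        (le_sup_of_le_left le_sup_right)
    · exact sup_le le_sup_right (le_sup_of_le_left (le_sup_of_le_left le_sup_right))
  have hjA : ¬ j ≤ A.sup id := fun h =>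
    hB.not_le_sup_sup_of_ssubset hstar.le hmin (Finset.erase_ssubset hb) (le_sup_of_le_left h)
  exact hjsd.le_of_sup_eq_sup hzj
    ((hj.le_of_lt_of_covBy hstar (inf_lt_left.2 hjA)).trans le_sup_right)

theorem IsAbsorbingAntichain.erase_subset_of_joinRefines [DecidableEq α]
    (hjsd : JoinSemidistrib α) (hj : JoinIrred j) (hstar : jstar ⋖ j)
    (hB : IsAbsorbingAntichain j jstar B)
    (hmin : ∀ B', IsAbsorbingAntichain j jstar B' → JoinRefines B' B → B' = B) {b : α}
    (hb : b ∈ B) {C : Finset α} (hCsup : C.sup id = (B.erase b).sup id ⊔ j)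
    (hCanti : IsAntichain (· ≤ ·) (C : Set α)) (hCref : JoinRefines C (insert j (B.erase b)))
    (hjC : j ∈ C) : B.erase b ⊆ C := by
  have hC'sup : j ⊔ (C.erase j).sup id = (B.erase b).sup id ⊔ j := by
    rw [← hCsup]
    conv_rhs => rw [← Finset.insert_erase hjC, Finset.sup_insert]
    rfl
  have hjX : j ≤ (insert b (C.erase j)).sup id ⊔ jstar := by
    rw [Finset.sup_insert]
    exact hB.le_sup_sup_of_sup_eq hjsd hj hstar hmin hb hC'sup
  have hincomp : ∀ x ∈ insert b (C.erase j), ¬ j ≤ x ∧ ¬ x ≤ j := by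
    intro x hx
    rcases Finset.mem_insert.1 hx with rfl | hxC'
    · exact hB.incomp hb
    · have hx := Finset.mem_of_mem_erase hxC'
      have hxj := Finset.ne_of_mem_erase hxC'
      exact ⟨fun h => hxj (hCanti.eq hjC hx h).symm, fun h => hxj (hCanti.eq hx hjC h)⟩
  have hrefB : JoinRefines (insert b (C.erase j)) B := by
    intro x hx
    rcases Finset.mem_insert.1 hx with rfl | hxC'
    · exact ⟨x, hb, le_rfl⟩
    · obtain ⟨a, ha, hxa⟩ := hCref.erase_of_isAntichain hCanti hjC x hxC'
      exact ⟨a, Finset.mem_of_mem_erase ha, hxa⟩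
  intro a ha
  rcases Finset.mem_insert.1 (subset_of_le_sup_of_joinRefines hstar.le hmin hincomp hjX hrefB
    (Finset.mem_of_mem_erase ha)) with rfl | haC'
  · exact absurd rfl (Finset.ne_of_mem_erase ha)
  · exact Finset.mem_of_mem_erase haC'

end Absorbing

theorem stmt_12_general {α : Type*} [Lattice α] [OrderBot α] [Fintype α] [DecidableEq α]
    (hjsd : JoinSemidistrib α) (j jstar : α) (hj : JoinIrred j) (hstar : jstar ⋖ j)
    (B : Finset α) (hjB : j ∉ B)
    (hBjanti : IsAntichain (· ≤ ·) (insert j (↑B : Set α)))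
    (hBeq : B.sup id ⊔ j = B.sup id ⊔ jstar)
    (hmin : ∀ B' : Finset α, B'.Nonempty → j ∉ B' →
      IsAntichain (· ≤ ·) (↑B' : Set α) →
      IsAntichain (· ≤ ·) (insert j (↑B' : Set α)) →
      B'.sup id ⊔ j = B'.sup id ⊔ jstar → JoinRefines B' B → B' = B) :
    ∀ b ∈ B, CanonicalJoinRep (insert j (B.erase b)) ((B.erase b).sup id ⊔ j) := by
  intro b hb
  have hB : IsAbsorbingAntichain j jstar B := ⟨hjB, hBjanti, hBeq⟩
  have hmin' : ∀ B', IsAbsorbingAntichain j jstar B' → JoinRefines B' B → B' = B :=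
    fun B' hB' => hmin B' (hB'.nonempty hstar.lt) hB'.1 (hB'.2.1.subset (Set.subset_insert _ _))
      hB'.2.1 hB'.2.2
  obtain ⟨C, hCsup, hCanti, hCref⟩ := hjsd.exists_antichain_forall_joinRefines
    ((B.erase b).sup id ⊔ j)
  have hrep : (insert j (B.erase b)).sup id = (B.erase b).sup id ⊔ j := by
    rw [Finset.sup_insert, sup_comm]; rfl
  have hjC : j ∈ C := mem_of_joinRefines_insert hj hstar
    (hB.not_le_sup_sup_of_ssubset hstar.le hmin' (Finset.erase_ssubset hb))
    (hCsup ▸ le_sup_right) (hCref _ hrep)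
  have hjAC : insert j (B.erase b) ⊆ C := Finset.insert_subset hjC
    (hB.erase_subset_of_joinRefines hjsd hj hstar hmin' hb hCsup hCanti (hCref _ hrep) hjC)
  obtain rfl : C = insert j (B.erase b) :=
    ((hCref _ hrep).subset_of_isAntichain hjAC hCanti).antisymm hjAC
  exact canonicalJoinRep_of_forall_joinRefines hCsup hCanti hCref

/-- Lemma (refinement-minimal): if `B` is a nonempty antichain in `𝒜_j` with
`⋁B ⊔ j = ⋁B ⊔ j_*`, minimal in join-refinement among all such antichains, then for each
`b ∈ B` the set `(B \ {b}) ∪ {j}` is the canonical join representation of `⋁(B \ {b}) ⊔ j`. -/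
theorem stmt_12 {α : Type*} [Lattice α] [OrderBot α] [Fintype α] [DecidableEq α]
    (hjsd : JoinSemidistrib α) (j jstar : α) (hj : JoinIrred j) (hstar : jstar ⋖ j)
    (hk : ¬ ∃ m : α, IsGreatest {a : α | jstar ≤ a ∧ ¬ j ≤ a} m)
    (B : Finset α) (hBne : B.Nonempty) (hjB : j ∉ B)
    (hBanti : IsAntichain (· ≤ ·) (↑B : Set α))
    (hBjanti : IsAntichain (· ≤ ·) (insert j (↑B : Set α)))
    (hBeq : B.sup id ⊔ j = B.sup id ⊔ jstar)
    (hmin : ∀ B' : Finset α, B'.Nonempty → j ∉ B' →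
      IsAntichain (· ≤ ·) (↑B' : Set α) →
      IsAntichain (· ≤ ·) (insert j (↑B' : Set α)) →
      B'.sup id ⊔ j = B'.sup id ⊔ jstar → JoinRefines B' B → B' = B) :
    ∀ b ∈ B, CanonicalJoinRep (insert j (B.erase b)) ((B.erase b).sup id ⊔ j) :=
  stmt_12_general hjsd j jstar hj hstar B hjB hBjanti hBeq hmin
end
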